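/- For every type σ and all values a, b in Bσ: B̂(≐σ) a b = 1 if and only if a = b; that is, the closed term ≐σ denotes the identity predicate on Bσ. -/

import Mathlib

namespace PTT


/-- Simple types over a single base type `B`. -/
inductive Ty : Type
  | base : Ty
  | arrow : Ty → Ty → Ty
deriving DecidableEq

/-- Names: the constants `⊥` and `→`, and variables (an index together with a type). -/
inductive Name : Type
  | bot : Name
  | imp : Name
  | var : ℕ → Ty → Name
deriving DecidableEq

/-- The type of a name. -/
def Name.ty : Name → Ty
  | .bot => .base
  | .imp => .arrow .base (.arrow .base .base)
  | .var _ σ => σ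

/-- Terms: names, abstraction over a variable, application. -/
inductive Tm : Type
  | name : Name → Tm
  | lam : ℕ → Ty → Tm → Tm
  | app : Tm → Tm → Tm
deriving DecidableEq

/-- The term `⊥`. -/
def botTm : Tm := .name .bot

/-- The variable `(n, σ)` as a term. -/
def vr (n : ℕ) (σ : Ty) : Tm := .name (.var n σ)

/-- Implication `s → t`. -/
def impTm (s t : Tm) : Tm := .app (.app (.name .imp) s) t

/-- `⊤ := ⊥ → ⊥`. -/
def topTm : Tm := impTm botTm botTm

/-- `¬ s := s → ⊥`. -/
def negTm (s : Tm) : Tm := impTm s botTm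

/-- `s ∨ t := (s → t) → t`. -/
def orTm (s t : Tm) : Tm := impTm (impTm s t) t

/-- `s ∧ t := ¬(¬s ∨ ¬t)`. -/
def andTm (s t : Tm) : Tm := negTm (orTm (negTm s) (negTm t))

/-- `s ≡ t := (s → t) ∧ (t → s)`. -/
def equivTm (s t : Tm) : Tm := andTm (impTm s t) (impTm t s)

/-- The typing relation. -/
inductive HasTy : Tm → Ty → Prop
  | name (x : Name) : HasTy (.name x) x.ty
  | lam {n σ s τ} : HasTy s τ → HasTy (.lam n σ s) (.arrow σ τ)
  | app {s t σ τ} : HasTy s (.arrow σ τ) → HasTy t σ → HasTy (.app s t) τ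

/-- Free variables of a term. -/
def fv : Tm → Finset (ℕ × Ty)
  | .name (.var n σ) => {(n, σ)}
  | .name _ => ∅
  | .lam n σ s => (fv s).erase (n, σ)
  | .app s t => fv s ∪ fv t

/-- A term is closed if it has no free variables. -/
def Closed (s : Tm) : Prop := fv s = ∅

/-- Capture-free parallel substitution (bound variables are renamed). -/
def substAux (ρ : ℕ × Ty → Tm) : Tm → Tm
  | .name (.var n σ) => ρ (n, σ)
  | .name x => .name x
  | .app s t => .app (substAux ρ s) (substAux ρ t)
  | .lam n σ s =>
      let used : Finset ℕ :=
        ((fv s).erase (n, σ)).biUnion (fun p => (fv (ρ p)).image Prod.fst)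
      let m : ℕ := used.sup id + 1
      .lam m σ (substAux (Function.update ρ (n, σ) (vr m σ)) s)

/-- Capture-free substitution `s[(n,σ) := t]`. -/
def subst (s : Tm) (n : ℕ) (σ : Ty) (t : Tm) : Tm :=
  substAux (Function.update (fun p => vr p.1 p.2) (n, σ) t) s

/-- Contexts: terms with exactly one hole (possibly under binders). -/
inductive Ctx : Type
  | hole : Ctx
  | lam : ℕ → Ty → Ctx → Ctx
  | appL : Ctx → Tm → Ctx
  | appR : Tm → Ctx → Ctx

/-- Filling the hole of a context with a term (capturing is allowed). -/
def Ctx.fill : Ctx → Tm → Tm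
  | .hole, s => s
  | .lam n σ C, s => .lam n σ (C.fill s)
  | .appL C t, s => .app (C.fill s) t
  | .appR t C, s => .app t (C.fill s)

/-- `C` captures the variable `p` if the hole of `C` lies below a binder for `p`. -/
def Ctx.captures : Ctx → ℕ × Ty → Prop
  | .hole, _ => False
  | .lam n σ C, p => p = (n, σ) ∨ C.captures p
  | .appL C _, p => C.captures p
  | .appR _ C, p => C.captures p

/-- `C` is admissible for `A` if it captures no variable free in `A`. -/
def Ctx.Admissible (C : Ctx) (A : Finset Tm) : Prop :=
  ∀ p ∈ A.biUnion fv, ¬ C.captures p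

/-- `s` is a subterm of `t`. -/
def Subterm (s t : Tm) : Prop := ∃ C : Ctx, C.fill s = t

/-- β-redexes. -/
def IsBetaRedex : Tm → Prop
  | .app (.lam _ _ _) _ => True
  | _ => False

/-- A term is β-normal if none of its subterms is a β-redex. -/
def BetaNormal (t : Tm) : Prop := ∀ s, Subterm s t → ¬ IsBetaRedex s

/-- Lambda equivalence: the least equivalence on well-typed terms containing
α-, β-, η-conversion and closed under arbitrary contexts. -/
inductive LamEq : Tm → Tm → Prop
  | refl {s σ} : HasTy s σ → LamEq s s
  | symm {s t} : LamEq s t → LamEq t s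
  | trans {s t u} : LamEq s t → LamEq t u → LamEq s u
  | alpha {n m σ s τ} : HasTy (.lam n σ s) τ → (m, σ) ∉ fv s →
      LamEq (.lam n σ s) (.lam m σ (subst s n σ (vr m σ)))
  | beta {n σ s t τ} : HasTy (.app (.lam n σ s) t) τ →
      LamEq (.app (.lam n σ s) t) (subst s n σ t)
  | eta {n σ s τ} : HasTy (.lam n σ (.app s (vr n σ))) τ → (n, σ) ∉ fv s →
      LamEq (.lam n σ (.app s (vr n σ))) s
  | ctx {s t σ} (C : Ctx) : LamEq s t → HasTy (C.fill s) σ → LamEq (C.fill s) (C.fill t)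

/-- The standard set-theoretic interpretation of types: `B` is interpreted as the
two truth values (`Bool`), functional types as full function spaces. -/
def Ty.sem : Ty → Type
  | .base => Bool
  | .arrow σ τ => σ.sem → τ.sem

def Ty.semDefault : (σ : Ty) → σ.sem
  | .base => false
  | .arrow _ τ => fun _ => τ.semDefault

instance (σ : Ty) : Inhabited σ.sem := ⟨σ.semDefault⟩

noncomputable instance Ty.semFintype : (σ : Ty) → Fintype σ.sem
  | .base => inferInstanceAs (Fintype Bool)
  | .arrow σ τ =>
      letI := Ty.semFintype σ
      letI := Ty.semFintype τ
      letI := Classical.decEq σ.sem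
      inferInstanceAs (Fintype (σ.sem → τ.sem))

def Ty.semCast {σ τ : Ty} (h : σ = τ) (v : σ.sem) : τ.sem := h ▸ v

/-- An interpretation assigns to every variable a value of the corresponding type
(the constants `⊥` and `→` have their values fixed). -/
def Interp : Type := ℕ → (σ : Ty) → σ.sem

def Interp.update (I : Interp) (n : ℕ) (σ : Ty) (v : σ.sem) : Interp :=
  fun m τ => if h : m = n ∧ τ = σ then Ty.semCast h.2.symm v else I m τ

/-- Type inference. -/
def typeOf : Tm → Option Ty
  | .name x => some x.ty
  | .lam _ σ s => (typeOf s).map (Ty.arrow σ)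
  | .app s t =>
      match typeOf s, typeOf t with
      | some (.arrow σ τ), some σ' => if σ = σ' then some τ else none
      | _, _ => none

/-- The canonical extension `Î` of an interpretation to all terms: `eval I s σ`
is the value of `s` at type `σ` (on well-typed terms this is the usual
denotation; junk default values are used at type mismatches). -/
def eval (I : Interp) : Tm → (σ : Ty) → σ.sem
  | .name (.var n τ), σ => if h : τ = σ then Ty.semCast h (I n τ) else default
  | .name .bot, σ =>
      match σ with
      | .base => false
      | _ => default
  | .name .imp, σ =>
      match σ with
      | .arrow .base (.arrow .base .base) => fun a b => !a || b
      | _ => default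
  | .app s t, σ =>
      match typeOf t with
      | some τ => eval I s (.arrow τ σ) (eval I t τ)
      | none => default
  | .lam n τ s, σ =>
      match σ with
      | .base => default
      | .arrow σ₁ σ₂ =>
          if h : σ₁ = τ then
            fun a => eval (I.update n τ (Ty.semCast h a)) s σ₂
          else default

/-- `I` satisfies the formula `s` if `Î s = 1`. -/
def Satisfies (I : Interp) (s : Tm) : Prop := eval I s .base = true

/-- A formula is valid if every interpretation satisfies it. -/
def ValidFml (s : Tm) : Prop := ∀ I : Interp, Satisfies I s

/-- A sequent `A ⇒ s` is valid if every interpretation satisfying `A` satisfies `s`. -/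
def ValidSeq (A : Finset Tm) (s : Tm) : Prop :=
  ∀ I : Interp, (∀ t ∈ A, Satisfies I t) → Satisfies I s

/-- Finite disjunction (the empty disjunction is `⊥`). -/
def orList : List Tm → Tm
  | [] => botTm
  | [s] => s
  | s :: l => orTm s (orList l)

/-- Finite conjunction (the empty conjunction is `⊤`). -/
def andList : List Tm → Tm
  | [] => topTm
  | [s] => s
  | s :: l => andTm s (andList l)

/-- The argument types of a type (every type has the form `σ₁…σₙB`). -/
def Ty.args : Ty → List Ty
  | .base => []
  | .arrow σ τ => σ :: τ.args

/-- Tuples of values along a list of types. -/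
def Tup : List Ty → Type
  | [] => PUnit
  | σ :: l => σ.sem × Tup l

noncomputable instance TupFintype : (l : List Ty) → Fintype (Tup l)
  | [] => inferInstanceAs (Fintype PUnit)
  | σ :: l =>
      letI := TupFintype l
      inferInstanceAs (Fintype (σ.sem × Tup l))

/-- Applying a function value to a tuple of arguments (the result type is `B`). -/
def Ty.applyTup : (σ : Ty) → σ.sem → Tup σ.args → Bool
  | .base, a, _ => a
  | .arrow _ τ, f, p => τ.applyTup (f p.1) p.2

/-- Quote/identity data for each type in a list: a quote function and the term `≐`. -/
def ArgData : List Ty → Type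
  | [] => PUnit
  | σ :: l => ((σ.sem → Tm) × Tm) × ArgData l

/-- The conjunction list `x_k ≐_{σ_k} (↓_{σ_k} b_k), …` for a tuple `b`. -/
def eqConj : (l : List Ty) → ArgData l → ℕ → Tup l → List Tm
  | [], _, _, _ => []
  | σ :: l, (d, ds), k, (b, bs) =>
      (.app (.app d.2 (vr k σ)) (d.1 b)) :: eqConj l ds (k + 1) bs

/-- `λ x_k : σ_k. …` binding one variable for each type in the list. -/
def mkLams : (l : List Ty) → ℕ → Tm → Tm
  | [], _, body => body
  | σ :: l, k, body => .lam k σ (mkLams l (k + 1) body)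

/-- The body of the quote term
`↓_{σ₁…σₙB} a := λx₁…xₙ. ⋁_{b₁…bₙ, a b₁…bₙ = 1} ⋀_j x_j ≐_{σ_j} (↓_{σ_j} b_j)`. -/
noncomputable def quoteBodyAux (σ : Ty) (ad : ArgData σ.args) (a : σ.sem) : Tm :=
  mkLams σ.args 0 (orList
    ((((Finset.univ : Finset (Tup σ.args)).toList.filter
        (fun b => σ.applyTup a b))).map
      (fun b => andList (eqConj σ.args ad 0 b))))

/-- `∀σ := λf. ⋀_{a ∈ Bσ} f (↓σ a)`, given the quote function for `σ`. -/
noncomputable def allTmAux (σ : Ty) (q : σ.sem → Tm) : Tm :=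
  .lam 0 (.arrow σ .base)
    (andList (((Finset.univ : Finset σ.sem).toList).map
      (fun a => .app (vr 0 (.arrow σ .base)) (q a))))

mutual
  /-- The quote function `↓σ` together with the identity term `≐σ`. -/
  noncomputable def quoteEq : (σ : Ty) → ((σ.sem → Tm) × Tm)
    | .base =>
        (fun a => quoteBodyAux .base PUnit.unit a,
         .lam 0 .base (.lam 1 .base (equivTm (vr 0 .base) (vr 1 .base))))
    | .arrow σ τ =>
        (fun a => quoteBodyAux (.arrow σ τ) ((quoteEq σ, argData τ) : ArgData (σ :: τ.args)) a,
         .lam 0 (.arrow σ τ) (.lam 1 (.arrow σ τ)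
           (.app (allTmAux σ (quoteEq σ).1)
             (.lam 2 σ
               (.app (.app (quoteEq τ).2
                  (.app (vr 0 (.arrow σ τ)) (vr 2 σ)))
                (.app (vr 1 (.arrow σ τ)) (vr 2 σ)))))))
  /-- Quote/identity data for all argument types of a type. -/
  noncomputable def argData : (σ : Ty) → ArgData σ.args
    | .base => PUnit.unit
    | .arrow σ τ => ((quoteEq σ, argData τ) : ArgData (σ :: τ.args))
end

/-- The quote function `↓σ : Bσ → Λ`. -/
noncomputable def quote (σ : Ty) (a : σ.sem) : Tm := (quoteEq σ).1 a

/-- The term `≐σ : σσB` denoting the identity predicate on `Bσ`. -/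
noncomputable def eqTm (σ : Ty) : Tm := (quoteEq σ).2

/-- The term `∀σ : (σB)B`. -/
noncomputable def allTm (σ : Ty) : Tm := allTmAux σ (quote σ)


/-- Propositional formulas: `s ::= x | ⊥ | s → s` with `x` a variable of type `B`. -/
inductive Propositional : Tm → Prop
  | var (n : ℕ) : Propositional (vr n .base)
  | bot : Propositional botTm
  | imp {s t} : Propositional s → Propositional t → Propositional (impTm s t)

/-- A type-respecting substitution of terms for variables. -/
def IsSubstitution (ρ : ℕ × Ty → Tm) : Prop := ∀ n σ, HasTy (ρ (n, σ)) σ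

/-- A formula is tautologous if it is a substitution instance of a tautology
(a valid propositional formula). -/
def Tautologous (s : Tm) : Prop :=
  ∃ t ρ, Propositional t ∧ ValidFml t ∧ IsSubstitution ρ ∧ s = substAux ρ t

/-- The proof system: Triv, Weak, Ded, MP, DN, Lam and Boolean replacement (BR).
Sequents consist of a finite set of formulas and a formula. -/
inductive Ded : Finset Tm → Tm → Prop
  | triv {A s} : (∀ t ∈ A, HasTy t .base) → HasTy s .base → Ded (insert s A) s
  | weak {A s t} : HasTy s .base → Ded A t → Ded (insert s A) t
  | ded {A s t} : Ded (insert s A) t → Ded A (impTm s t)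
  | mp {A s t} : Ded A (impTm s t) → Ded A s → Ded A t
  | dn {A s} : Ded A (negTm (negTm s)) → Ded A s
  | lam {A s t} : Ded A s → LamEq s t → HasTy t .base → Ded A t
  | br {A s t} (C : Ctx) : C.Admissible A → Ded A (equivTm s t) →
      Ded A (C.fill s) → HasTy (C.fill t) .base → Ded A (C.fill t)

/-!
By simultaneous induction on `σ = σ₁ … σₙ B`: in every interpretation `↓σ a` denotes `a` and
`≐σ` denotes equality. Evaluated at a tuple `p`, the disjunct of `↓σ a` indexed by `b` states
`pⱼ ≐ ↓bⱼ` for all `j`, which by induction holds iff `p = b`; so the disjunction holds iff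
`a p = 1`. Since every `c ∈ Bσ` is denoted by `↓σ c`, the conjunction `∀σ` ranges over all of
`Bσ`, and `f ≐ g` reduces by extensionality to `f c ≐τ g c` for all `c`. The evaluator reads the
type of every argument, so well-typedness of `↓σ a` and `≐σ` is carried along the induction.
-/

namespace Interp

lemma update_self (I : Interp) (n : ℕ) (σ : Ty) (v : σ.sem) : I.update n σ v n σ = v := by
  rw [update, dif_pos ⟨rfl, rfl⟩]
  rfl

lemma update_of_ne (I : Interp) {n m : ℕ} {σ τ : Ty} (v : σ.sem) (h : m ≠ n) :
    I.update n σ v m τ = I m τ := by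
  rw [update, dif_neg (fun hmn => h hmn.1)]

def updateTup : Interp → ℕ → (l : List Ty) → Tup l → Interp
  | I, _, [], _ => I
  | I, k, σ :: l, p => updateTup (I.update k σ p.1) (k + 1) l p.2

def readTup (I : Interp) : ℕ → (l : List Ty) → Tup l
  | _, [] => PUnit.unit
  | k, σ :: l => (I k σ, readTup I (k + 1) l)

lemma updateTup_of_lt : ∀ (I : Interp) {k m : ℕ} (l : List Ty) (p : Tup l) (τ : Ty),
    m < k → I.updateTup k l p m τ = I m τ
  | _, _, _, [], _, _, _ => rfl
  | I, k, m, σ :: l, p, τ, h => by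
    rw [updateTup, updateTup_of_lt _ l p.2 τ (by omega), update_of_ne _ _ (by omega)]

lemma readTup_updateTup : ∀ (I : Interp) (k : ℕ) (l : List Ty) (p : Tup l),
    (I.updateTup k l p).readTup k l = p
  | _, _, [], _ => rfl
  | I, k, σ :: l, p => by
    rw [readTup, updateTup, updateTup_of_lt _ l p.2 σ k.lt_succ_self, update_self,
      readTup_updateTup]
    rfl

end Interp

lemma Ty.applyTup_injective : ∀ σ : Ty, Function.Injective σ.applyTup
  | .base, _, _, h => congrFun h PUnit.unit
  | .arrow _ τ, _, _, h => funext fun a => τ.applyTup_injective (funext fun p => congrFun h (a, p))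

lemma typeOf_vr (n : ℕ) (σ : Ty) : typeOf (vr n σ) = some σ := rfl

lemma eval_vr (I : Interp) (n : ℕ) (σ : Ty) : eval I (vr n σ) σ = I n σ := by
  show (if h : σ = σ then Ty.semCast h (I n σ) else default) = I n σ
  rw [dif_pos rfl]
  rfl

lemma typeOf_app {s t : Tm} {σ τ : Ty} (hs : typeOf s = some (.arrow σ τ))
    (ht : typeOf t = some σ) : typeOf (.app s t) = some τ := by
  simp [typeOf, hs, ht]

lemma eval_app (I : Interp) {s t : Tm} {τ : Ty} (σ : Ty) (ht : typeOf t = some τ) :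
    eval I (.app s t) σ = eval I s (.arrow τ σ) (eval I t τ) := by
  show (match typeOf t with
      | some τ => eval I s (.arrow τ σ) (eval I t τ)
      | none => default) = _
  rw [ht]

lemma typeOf_lam (n : ℕ) (σ : Ty) {s : Tm} {τ : Ty} (hs : typeOf s = some τ) :
    typeOf (.lam n σ s) = some (.arrow σ τ) := by
  simp [typeOf, hs]

lemma eval_lam (I : Interp) (n : ℕ) {σ : Ty} (τ : Ty) (s : Tm) (a : σ.sem) :
    eval I (.lam n σ s) (.arrow σ τ) a = eval (I.update n σ a) s τ := by
  show (if h : σ = σ then fun a => eval (I.update n σ (Ty.semCast h a)) s τ else default) a = _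
  rw [dif_pos rfl]
  rfl

lemma not_satisfies_botTm (I : Interp) : ¬ Satisfies I botTm := Bool.false_ne_true

lemma typeOf_impTm {s t : Tm} (hs : typeOf s = some .base) (ht : typeOf t = some .base) :
    typeOf (impTm s t) = some .base :=
  typeOf_app (typeOf_app rfl hs) ht

lemma satisfies_impTm_iff (I : Interp) {s t : Tm} (hs : typeOf s = some .base)
    (ht : typeOf t = some .base) :
    Satisfies I (impTm s t) ↔ (Satisfies I s → Satisfies I t) := by
  rw [Satisfies, impTm, eval_app I _ ht, eval_app I _ hs]
  have hbool : ∀ x y : Bool, (!x || y) = true ↔ (x = true → y = true) := by decide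
  exact hbool _ _

lemma typeOf_negTm {s : Tm} (hs : typeOf s = some .base) : typeOf (negTm s) = some .base :=
  typeOf_impTm hs rfl

lemma satisfies_negTm_iff (I : Interp) {s : Tm} (hs : typeOf s = some .base) :
    Satisfies I (negTm s) ↔ ¬ Satisfies I s := by
  rw [negTm, satisfies_impTm_iff I hs rfl, iff_false_intro (not_satisfies_botTm I)]

lemma typeOf_orTm {s t : Tm} (hs : typeOf s = some .base) (ht : typeOf t = some .base) :
    typeOf (orTm s t) = some .base :=
  typeOf_impTm (typeOf_impTm hs ht) ht

lemma satisfies_orTm_iff (I : Interp) {s t : Tm} (hs : typeOf s = some .base)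
    (ht : typeOf t = some .base) :
    Satisfies I (orTm s t) ↔ Satisfies I s ∨ Satisfies I t := by
  rw [orTm, satisfies_impTm_iff I (typeOf_impTm hs ht) ht, satisfies_impTm_iff I hs ht]
  tauto

lemma typeOf_andTm {s t : Tm} (hs : typeOf s = some .base) (ht : typeOf t = some .base) :
    typeOf (andTm s t) = some .base :=
  typeOf_negTm (typeOf_orTm (typeOf_negTm hs) (typeOf_negTm ht))

lemma satisfies_andTm_iff (I : Interp) {s t : Tm} (hs : typeOf s = some .base)
    (ht : typeOf t = some .base) :
    Satisfies I (andTm s t) ↔ Satisfies I s ∧ Satisfies I t := by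
  rw [andTm, satisfies_negTm_iff I (typeOf_orTm (typeOf_negTm hs) (typeOf_negTm ht)),
    satisfies_orTm_iff I (typeOf_negTm hs) (typeOf_negTm ht), satisfies_negTm_iff I hs,
    satisfies_negTm_iff I ht]
  tauto

lemma typeOf_equivTm {s t : Tm} (hs : typeOf s = some .base) (ht : typeOf t = some .base) :
    typeOf (equivTm s t) = some .base :=
  typeOf_andTm (typeOf_impTm hs ht) (typeOf_impTm ht hs)

lemma satisfies_equivTm_iff (I : Interp) {s t : Tm} (hs : typeOf s = some .base)
    (ht : typeOf t = some .base) :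
    Satisfies I (equivTm s t) ↔ (Satisfies I s ↔ Satisfies I t) := by
  rw [equivTm, satisfies_andTm_iff I (typeOf_impTm hs ht) (typeOf_impTm ht hs),
    satisfies_impTm_iff I hs ht, satisfies_impTm_iff I ht hs]
  exact iff_def.symm

lemma typeOf_orList : ∀ {l : List Tm}, (∀ s ∈ l, typeOf s = some .base) →
    typeOf (orList l) = some .base
  | [], _ => rfl
  | [s], h => h s (List.mem_singleton_self s)
  | s :: t :: l, h => by
    rw [List.forall_mem_cons] at h
    exact typeOf_orTm h.1 (typeOf_orList h.2)

lemma satisfies_orList_iff (I : Interp) : ∀ {l : List Tm}, (∀ s ∈ l, typeOf s = some .base) →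
    (Satisfies I (orList l) ↔ ∃ s ∈ l, Satisfies I s)
  | [], _ => by simpa [orList] using not_satisfies_botTm I
  | [s], _ => by simp [orList]
  | s :: t :: l, h => by
    rw [List.forall_mem_cons] at h
    rw [show orList (s :: t :: l) = orTm s (orList (t :: l)) from rfl,
      satisfies_orTm_iff I h.1 (typeOf_orList h.2), satisfies_orList_iff I h.2]
    exact (List.exists_mem_cons_iff _ _ _).symm

lemma typeOf_andList : ∀ {l : List Tm}, (∀ s ∈ l, typeOf s = some .base) →
    typeOf (andList l) = some .base
  | [], _ => rfl
  | [s], h => h s (List.mem_singleton_self s)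
  | s :: t :: l, h => by
    rw [List.forall_mem_cons] at h
    exact typeOf_andTm h.1 (typeOf_andList h.2)

lemma satisfies_andList_iff (I : Interp) : ∀ {l : List Tm}, (∀ s ∈ l, typeOf s = some .base) →
    (Satisfies I (andList l) ↔ ∀ s ∈ l, Satisfies I s)
  | [], _ => iff_of_true rfl (List.forall_mem_nil _)
  | [s], _ => by simp [andList]
  | s :: t :: l, h => by
    rw [List.forall_mem_cons] at h
    rw [show andList (s :: t :: l) = andTm s (andList (t :: l)) from rfl,
      satisfies_andTm_iff I h.1 (typeOf_andList h.2), satisfies_andList_iff I h.2,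
      List.forall_mem_cons (l := t :: l)]

lemma typeOf_mkLams : ∀ (σ : Ty) (k : ℕ) {body : Tm}, typeOf body = some .base →
    typeOf (mkLams σ.args k body) = some σ
  | .base, _, _, h => h
  | .arrow _ τ, k, _, h => by
    simp [mkLams, Ty.args, typeOf, typeOf_mkLams τ (k + 1) h]

lemma eval_mkLams : ∀ (σ : Ty) (I : Interp) (k : ℕ) (body : Tm) (p : Tup σ.args),
    σ.applyTup (eval I (mkLams σ.args k body) σ) p = eval (I.updateTup k σ.args p) body .base
  | .base, _, _, _, _ => rfl
  | .arrow σ τ, I, k, body, p => by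
    show τ.applyTup (eval I (.lam k σ (mkLams τ.args (k + 1) body)) (.arrow σ τ) p.1) p.2 = _
    rw [eval_lam]
    exact eval_mkLams τ _ (k + 1) body p.2

lemma eqTm_base : eqTm .base = .lam 0 .base (.lam 1 .base (equivTm (vr 0 .base) (vr 1 .base))) :=
  rfl

lemma eqTm_arrow (σ τ : Ty) :
    eqTm (.arrow σ τ) = .lam 0 (.arrow σ τ) (.lam 1 (.arrow σ τ) (.app (allTm σ)
      (.lam 2 σ (.app (.app (eqTm τ) (.app (vr 0 (.arrow σ τ)) (vr 2 σ)))
        (.app (vr 1 (.arrow σ τ)) (vr 2 σ)))))) :=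
  rfl

lemma quote_eq_quoteBodyAux (σ : Ty) (a : σ.sem) : quote σ a = quoteBodyAux σ (argData σ) a := by
  cases σ <;> rfl

lemma eqConj_argData_arrow (σ τ : Ty) (k : ℕ) (b : Tup (Ty.arrow σ τ).args) :
    eqConj (Ty.arrow σ τ).args (argData (.arrow σ τ)) k b =
      .app (.app (eqTm σ) (vr k σ)) (quote σ b.1) :: eqConj τ.args (argData τ) (k + 1) b.2 :=
  rfl

structure QuoteCorrect (σ : Ty) : Prop where
  typeOf_quote : ∀ a : σ.sem, typeOf (quote σ a) = some σ
  eval_quote : ∀ (I : Interp) (a : σ.sem), eval I (quote σ a) σ = a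
  typeOf_eqTm : typeOf (eqTm σ) = some (.arrow σ (.arrow σ .base))
  eval_eqTm : ∀ (I : Interp) (a b : σ.sem),
    eval I (eqTm σ) (.arrow σ (.arrow σ .base)) a b = true ↔ a = b

namespace QuoteCorrect

variable {σ : Ty}

lemma typeOf_eqTm_app (h : QuoteCorrect σ) {s t : Tm} (hs : typeOf s = some σ)
    (ht : typeOf t = some σ) : typeOf (.app (.app (eqTm σ) s) t) = some .base :=
  typeOf_app (typeOf_app h.typeOf_eqTm hs) ht

lemma satisfies_eqTm_app_iff (h : QuoteCorrect σ) (I : Interp) {s t : Tm}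
    (hs : typeOf s = some σ) (ht : typeOf t = some σ) :
    Satisfies I (.app (.app (eqTm σ) s) t) ↔ eval I s σ = eval I t σ := by
  rw [Satisfies, eval_app I _ ht, eval_app I _ hs, h.eval_eqTm]

end QuoteCorrect

section Quote

variable {σ : Ty}

lemma typeOf_eqConj : ∀ {σ : Ty}, (∀ ρ ∈ σ.args, QuoteCorrect ρ) → ∀ (k : ℕ) (b : Tup σ.args),
    ∀ s ∈ eqConj σ.args (argData σ) k b, typeOf s = some .base
  | .base, _, _, _ => List.forall_mem_nil _
  | .arrow _ _, h, k, b => by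
    obtain ⟨hσ, hτ⟩ := List.forall_mem_cons.1 h
    rw [eqConj_argData_arrow, List.forall_mem_cons]
    exact ⟨hσ.typeOf_eqTm_app rfl (hσ.typeOf_quote b.1), typeOf_eqConj hτ (k + 1) b.2⟩

lemma forall_satisfies_eqConj_iff : ∀ {σ : Ty}, (∀ ρ ∈ σ.args, QuoteCorrect ρ) →
    ∀ (I : Interp) (k : ℕ) (b : Tup σ.args),
    (∀ s ∈ eqConj σ.args (argData σ) k b, Satisfies I s) ↔ I.readTup k σ.args = b
  | .base, _, _, _, _ => iff_of_true (List.forall_mem_nil _) rfl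
  | .arrow σ τ, h, I, k, b => by
    obtain ⟨hσ, hτ⟩ := List.forall_mem_cons.1 h
    rw [eqConj_argData_arrow, List.forall_mem_cons,
      hσ.satisfies_eqTm_app_iff I rfl (hσ.typeOf_quote b.1), eval_vr, hσ.eval_quote,
      forall_satisfies_eqConj_iff hτ]
    exact (Prod.ext_iff (x := (I k σ, I.readTup (k + 1) τ.args)) (y := b)).symm

lemma satisfies_andList_eqConj_iff (hargs : ∀ ρ ∈ σ.args, QuoteCorrect ρ)
    (I : Interp) (k : ℕ) (b : Tup σ.args) :
    Satisfies I (andList (eqConj σ.args (argData σ) k b)) ↔ I.readTup k σ.args = b :=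
  (satisfies_andList_iff I (typeOf_eqConj hargs k b)).trans
    (forall_satisfies_eqConj_iff hargs I k b)

lemma typeOf_quote_of_args (hargs : ∀ ρ ∈ σ.args, QuoteCorrect ρ) (a : σ.sem) :
    typeOf (quote σ a) = some σ := by
  rw [quote_eq_quoteBodyAux, quoteBodyAux]
  refine typeOf_mkLams σ 0 (typeOf_orList ?_)
  simp only [List.mem_map]
  rintro _ ⟨b, -, rfl⟩
  exact typeOf_andList (typeOf_eqConj hargs 0 b)

lemma eval_quote_of_args (hargs : ∀ ρ ∈ σ.args, QuoteCorrect ρ) (I : Interp) (a : σ.sem) :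
    eval I (quote σ a) σ = a := by
  refine σ.applyTup_injective (funext fun p => Bool.eq_iff_iff.2 ?_)
  rw [quote_eq_quoteBodyAux, quoteBodyAux, eval_mkLams]
  refine (satisfies_orList_iff _ ?_).trans ?_
  · simp only [List.mem_map]
    rintro _ ⟨b, -, rfl⟩
    exact typeOf_andList (typeOf_eqConj hargs 0 b)
  simp only [List.mem_map, List.mem_filter, Finset.mem_toList, Finset.mem_univ, true_and]
  constructor
  · rintro ⟨_, ⟨b, hab, rfl⟩, hsat⟩
    rw [satisfies_andList_eqConj_iff hargs, Interp.readTup_updateTup] at hsat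
    rwa [hsat]
  · intro hap
    exact ⟨_, ⟨p, hap, rfl⟩,
      (satisfies_andList_eqConj_iff hargs _ 0 p).2 (Interp.readTup_updateTup _ _ _ _)⟩

end Quote

section Identity

variable {σ τ : Ty}

lemma typeOf_allTm (hσ : QuoteCorrect σ) :
    typeOf (allTm σ) = some (.arrow (.arrow σ .base) .base) := by
  refine typeOf_lam _ _ (typeOf_andList ?_)
  simp only [List.mem_map]
  rintro _ ⟨c, -, rfl⟩
  exact typeOf_app rfl (hσ.typeOf_quote c)

lemma eval_allTm_iff (hσ : QuoteCorrect σ) (I : Interp) (F : (Ty.arrow σ .base).sem) :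
    eval I (allTm σ) (.arrow (.arrow σ .base) .base) F = true ↔ ∀ c, F c = true := by
  rw [allTm, allTmAux, eval_lam]
  refine (satisfies_andList_iff _ ?_).trans ?_
  · simp only [List.mem_map]
    rintro _ ⟨c, -, rfl⟩
    exact typeOf_app rfl (hσ.typeOf_quote c)
  simp only [List.forall_mem_map, Finset.mem_toList, Finset.mem_univ, forall_const]
  refine forall_congr' fun c => ?_
  rw [Satisfies, eval_app _ _ (hσ.typeOf_quote c), eval_vr, hσ.eval_quote, Interp.update_self]

lemma typeOf_eqTm_base : typeOf (eqTm .base) = some (.arrow .base (.arrow .base .base)) := rfl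

lemma eval_eqTm_base (I : Interp) (a b : Ty.base.sem) :
    eval I (eqTm .base) (.arrow .base (.arrow .base .base)) a b = true ↔ a = b := by
  rw [eqTm_base, eval_lam, eval_lam]
  change Satisfies _ (equivTm _ _) ↔ _
  rw [satisfies_equivTm_iff _ rfl rfl]
  simp only [Satisfies, eval_vr, Interp.update_self]
  rw [Interp.update_of_ne _ _ zero_ne_one, Interp.update_self]
  exact Bool.eq_iff_iff.symm

lemma typeOf_app_vr_vr (n m : ℕ) (σ τ : Ty) :
    typeOf (.app (vr n (.arrow σ τ)) (vr m σ)) = some τ :=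
  typeOf_app (typeOf_vr _ _) (typeOf_vr _ _)

lemma typeOf_eqTm_arrow (hσ : QuoteCorrect σ) (hτ : QuoteCorrect τ) :
    typeOf (eqTm (.arrow σ τ)) = some (.arrow (.arrow σ τ) (.arrow (.arrow σ τ) .base)) :=
  typeOf_lam _ _ <| typeOf_lam _ _ <| typeOf_app (typeOf_allTm hσ) <| typeOf_lam _ _ <|
    hτ.typeOf_eqTm_app (typeOf_app_vr_vr 0 2 σ τ) (typeOf_app_vr_vr 1 2 σ τ)

lemma eval_eqTm_arrow (hσ : QuoteCorrect σ) (hτ : QuoteCorrect τ) (I : Interp)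
    (a b : (Ty.arrow σ τ).sem) :
    eval I (eqTm (.arrow σ τ)) (.arrow (.arrow σ τ) (.arrow (.arrow σ τ) .base)) a b = true ↔
      a = b := by
  have hpoint := hτ.typeOf_eqTm_app (typeOf_app_vr_vr 0 2 σ τ) (typeOf_app_vr_vr 1 2 σ τ)
  rw [eqTm_arrow, eval_lam, eval_lam, eval_app _ _ (typeOf_lam _ _ hpoint), eval_allTm_iff hσ]
  refine (forall_congr' fun c => ?_).trans funext_iff.symm
  rw [eval_lam]
  change Satisfies _ _ ↔ _
  rw [hτ.satisfies_eqTm_app_iff _ (typeOf_app_vr_vr 0 2 σ τ) (typeOf_app_vr_vr 1 2 σ τ),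
    eval_app _ _ (typeOf_vr 2 σ), eval_app _ _ (typeOf_vr 2 σ)]
  simp only [eval_vr, Interp.update_self]
  have ha : ((I.update 0 _ a).update 1 _ b).update 2 σ c 0 (.arrow σ τ) = a := by
    rw [Interp.update_of_ne _ _ (show 0 ≠ 2 by decide), Interp.update_of_ne _ _ zero_ne_one,
      Interp.update_self]
  have hb : ((I.update 0 _ a).update 1 _ b).update 2 σ c 1 (.arrow σ τ) = b := by
    rw [Interp.update_of_ne _ _ (show 1 ≠ 2 by decide), Interp.update_self]
  rw [ha, hb]

end Identity

theorem quoteCorrect_and_args : ∀ σ : Ty, QuoteCorrect σ ∧ ∀ ρ ∈ σ.args, QuoteCorrect ρ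
  | .base =>
    have hargs : ∀ ρ ∈ Ty.base.args, QuoteCorrect ρ := List.forall_mem_nil _
    ⟨⟨typeOf_quote_of_args hargs, eval_quote_of_args hargs, typeOf_eqTm_base, eval_eqTm_base⟩,
      hargs⟩
  | .arrow σ τ =>
    have hσ := (quoteCorrect_and_args σ).1
    have hτ := quoteCorrect_and_args τ
    have hargs : ∀ ρ ∈ (Ty.arrow σ τ).args, QuoteCorrect ρ := List.forall_mem_cons.2 ⟨hσ, hτ.2⟩
    ⟨⟨typeOf_quote_of_args hargs, eval_quote_of_args hargs, typeOf_eqTm_arrow hσ hτ.1,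
      eval_eqTm_arrow hσ hτ.1⟩, hargs⟩

/-- `B̂(≐σ) a b = 1` iff `a = b`: the closed term `≐σ` denotes the
identity predicate on `Bσ`. -/
theorem eqTm_denotes (σ : Ty) (a b : σ.sem) (I : Interp) :
    eval I (eqTm σ) (.arrow σ (.arrow σ .base)) a b = true ↔ a = b :=
  (quoteCorrect_and_args σ).1.eval_eqTm I a b

end PTT
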